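/- arXiv:2007.11456 — 3 statements merged into one kernel-verified Lean document; each statement's English description precedes it below -/
import Mathlib

section
/- Let n ≥ 2 and let T ⊊ P_n be a proper β-join closed subsemigroup of P_n with M_n ⊆ T. Then there exists m ∈ ℕ such that T = P_n^m. -/
/-- Words in the alphabet `{1,…,n}`. -/
abbrev W (n : ℕ) := List (Fin n)

/-- The product of the polycyclic monoid `P_n`, realized on `Option (W n × W n)`,
with `none` the zero element and `some (μ, ν)` representing `s_μ s_ν*`. -/
def pmul {n : ℕ} : Option (W n × W n) → Option (W n × W n) → Option (W n × W n)
  | some (μ, ν), some (κ, lam) =>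
      if ν <+: κ then some (μ ++ κ.drop ν.length, lam)
      else if κ <+: ν then some (μ, lam ++ ν.drop κ.length)
      else none
  | _, _ => none

/-- The involution of `P_n`. -/
def pstar {n : ℕ} : Option (W n × W n) → Option (W n × W n)
  | some (μ, ν) => some (ν, μ)
  | none => none

/-- `P_n^{k,l}`, the set of elements `s_μ s_ν*` with `|μ| = k` and `|ν| = l`. -/
def Pkl (n k l : ℕ) : Set (Option (W n × W n)) :=
  {x | ∃ μ ν : W n, x = some (μ, ν) ∧ μ.length = k ∧ ν.length = l}

/-- `M_n = ⋃_k P_n^{k,k} ∪ {0}`. -/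
def Mn (n : ℕ) : Set (Option (W n × W n)) :=
  {x | x = none ∨ ∃ μ ν : W n, x = some (μ, ν) ∧ μ.length = ν.length}

/-- A wide subsemigroup of `P_n`: closed under the product and the involution, and
containing all idempotents (which are `0` and the `s_κ s_κ*`). -/
def IsWideSub (n : ℕ) (T : Set (Option (W n × W n))) : Prop :=
  (∀ a b, a ∈ T → b ∈ T → pmul a b ∈ T) ∧ (∀ a ∈ T, pstar a ∈ T) ∧
    (none ∈ T ∧ ∀ κ : W n, some (κ, κ) ∈ T)

/-- The cylinder set `C(μ) ⊆ {1,…,n}^ℕ` of sequences beginning with `μ`. -/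
def Cyl {n : ℕ} (μ : W n) : Set (ℕ → Fin n) :=
  {x | ∀ (i : ℕ) (h : i < μ.length), x i = μ[i]}

/-- A subsemigroup `T ⊆ P_n` is `β`-join closed if for every `s = s_μ s_ν*`:
`s ∈ T` iff there is a finite set `F` of words such that `s · s_κ s_κ* ∈ T` for
all `κ ∈ F` and `C(ν) ⊆ ⋃_{κ ∈ F} C(κ)`. -/
def IsJoinClosed (n : ℕ) (T : Set (Option (W n × W n))) : Prop :=
  ∀ μ ν : W n, some (μ, ν) ∈ T ↔
    ∃ F : Finset (W n), (∀ κ ∈ F, pmul (some (μ, ν)) (some (κ, κ)) ∈ T) ∧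
      Cyl ν ⊆ ⋃ κ ∈ F, Cyl κ

/-- `P_n^m = { s_μ s_ν* | |μ| ≡ |ν| (mod m) } ∪ {0}`. -/
def Pm (n m : ℕ) : Set (Option (W n × W n)) :=
  {x | x = none ∨ ∃ μ ν : W n, x = some (μ, ν) ∧ μ.length ≡ ν.length [MOD m]}

/-!
Since `M_n ⊆ T`, membership of `s_μ s_ν*` in `T` depends only on `|μ| - |ν|`: multiplying by the
idempotent `s_κ s_κ*` moves `(μ, ν)` to `(μ κ, ν κ)`, and `β`-join closedness reverses this step,
since `C(ν)` is covered by the cylinders `C(ν a)`, `a` a letter. The differences that occur form a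
subgroup `m ℤ` of `ℤ` (the involution gives negatives, the product sums), and then `T = P_n^m`.
-/

section Polycyclic

variable {n : ℕ}

theorem pmul_some_append (μ ν κ lam : W n) :
    pmul (some (μ, ν)) (some (ν ++ κ, lam)) = some (μ ++ κ, lam) := by
  simp [pmul]

theorem cyl_subset_iUnion_cyl_concat (ν : W n) : Cyl ν ⊆ ⋃ a : Fin n, Cyl (ν ++ [a]) := by
  intro x hx
  refine Set.mem_iUnion.2 ⟨x ν.length, fun i hi => ?_⟩
  rcases Nat.lt_succ_iff_lt_or_eq.1 (by simpa using hi) with hi | rfl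
  · rw [List.getElem_append_left hi]
    exact hx i hi
  · simp

variable {T : Set (Option (W n × W n))}
  (hmul : ∀ a b, a ∈ T → b ∈ T → pmul a b ∈ T) (hM : Mn n ⊆ T)
include hmul hM

theorem mem_of_length_eq {μ ν μ' ν' : W n} (hμ : μ'.length = μ.length)
    (hν : ν'.length = ν.length) (h : some (μ, ν) ∈ T) : some (μ', ν') ∈ T := by
  have hl : some (μ', μ) ∈ T := hM (Or.inr ⟨μ', μ, rfl, hμ⟩)
  have hr : some (ν, ν') ∈ T := hM (Or.inr ⟨ν, ν', rfl, hν.symm⟩)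
  simpa [pmul] using hmul _ _ (hmul _ _ hl h) hr

theorem append_mem_of_mem {μ ν : W n} (κ : W n) (h : some (μ, ν) ∈ T) :
    some (μ ++ κ, ν ++ κ) ∈ T := by
  simpa [pmul_some_append] using hmul _ _ h (hM (Or.inr ⟨ν ++ κ, ν ++ κ, rfl, rfl⟩))

theorem mem_of_append_mem (hJ : IsJoinClosed n T) (κ : W n) :
    ∀ {μ ν : W n}, some (μ ++ κ, ν ++ κ) ∈ T → some (μ, ν) ∈ T := by
  induction κ with
  | nil => simp
  | cons a κ ih =>
    intro μ ν h
    have hsnoc : some (μ ++ [a], ν ++ [a]) ∈ T := ih (by simpa using h)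
    refine (hJ μ ν).2 ⟨Finset.univ.image (ν ++ [·]), ?_, ?_⟩
    · simp only [Finset.mem_image, Finset.mem_univ, true_and, forall_exists_index,
        forall_apply_eq_imp_iff, pmul_some_append]
      exact fun b => mem_of_length_eq hmul hM (by simp) (by simp) hsnoc
    · simpa using cyl_subset_iUnion_cyl_concat ν

theorem mem_of_length_sub_eq (hJ : IsJoinClosed n T) {μ ν μ' ν' : W n}
    (hd : (μ.length : ℤ) - ν.length = (μ'.length : ℤ) - ν'.length) (h : some (μ', ν') ∈ T) :
    some (μ, ν) ∈ T := by
  have h' : some (μ ++ ν', ν ++ ν') ∈ T :=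
    mem_of_length_eq hmul hM (by simp only [List.length_append]; omega)
      (by simp only [List.length_append]; omega) (append_mem_of_mem hmul hM ν h)
  exact mem_of_append_mem hmul hM hJ ν' h'

def lengthDiffs (hstar : ∀ a ∈ T, pstar a ∈ T) (hJ : IsJoinClosed n T) : AddSubgroup ℤ where
  carrier := {d | ∃ μ ν : W n, some (μ, ν) ∈ T ∧ (μ.length : ℤ) - ν.length = d}
  zero_mem' := ⟨[], [], hM (Or.inr ⟨[], [], rfl, rfl⟩), by simp⟩
  neg_mem' := by
    rintro _ ⟨μ, ν, h, rfl⟩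
    exact ⟨ν, μ, hstar _ h, by ring⟩
  add_mem' := by
    rintro _ _ ⟨μ₁, ν₁, h₁, rfl⟩ ⟨μ₂, ν₂, h₂, rfl⟩
    have h₂' : some (ν₁ ++ μ₂, ν₁ ++ ν₂) ∈ T :=
      mem_of_length_sub_eq hmul hM hJ (by simp) h₂
    refine ⟨μ₁ ++ μ₂, ν₁ ++ ν₂, ?_, by push_cast [List.length_append]; ring⟩
    simpa [pmul_some_append] using hmul _ _ h₁ h₂'

theorem some_mem_iff_mem_lengthDiffs (hstar : ∀ a ∈ T, pstar a ∈ T) (hJ : IsJoinClosed n T)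
    (μ ν : W n) :
    some (μ, ν) ∈ T ↔ (μ.length : ℤ) - ν.length ∈ lengthDiffs hmul hM hstar hJ :=
  ⟨fun h => ⟨μ, ν, h, rfl⟩, fun ⟨_, _, h, hd⟩ => mem_of_length_sub_eq hmul hM hJ hd.symm h⟩

end Polycyclic

theorem AddSubgroup.exists_nat_forall_mem_iff_dvd (H : AddSubgroup ℤ) :
    ∃ m : ℕ, ∀ d, d ∈ H ↔ (m : ℤ) ∣ d := by
  obtain ⟨a, rfl⟩ := Int.subgroup_cyclic H
  exact ⟨a.natAbs, fun d => by
    rw [← AddSubgroup.zmultiples_eq_closure, ← Int.zmultiples_natAbs, Int.mem_zmultiples_iff]⟩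

theorem joinClosed_sub_eq_Pm_general (n : ℕ) (T : Set (Option (W n × W n)))
    (hmul : ∀ a b, a ∈ T → b ∈ T → pmul a b ∈ T)
    (hstar : ∀ a ∈ T, pstar a ∈ T)
    (hM : Mn n ⊆ T) (hJ : IsJoinClosed n T) :
    ∃ m : ℕ, T = Pm n m := by
  obtain ⟨m, hm⟩ := (lengthDiffs hmul hM hstar hJ).exists_nat_forall_mem_iff_dvd
  refine ⟨m, Set.ext fun x => ?_⟩
  rcases x with _ | ⟨μ, ν⟩
  · exact ⟨fun _ => Or.inl rfl, fun _ => hM (Or.inl rfl)⟩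
  · rw [some_mem_iff_mem_lengthDiffs hmul hM hstar hJ, hm, ← Nat.modEq_iff_dvd, Nat.ModEq.comm]
    simp [Pm]

/-- every proper `β`-join closed subsemigroup of `P_n` containing
`M_n` equals `P_n^m` for some `m ∈ ℕ`. -/
theorem joinClosed_sub_eq_Pm (n : ℕ) (hn : 2 ≤ n) (T : Set (Option (W n × W n)))
    (hmul : ∀ a b, a ∈ T → b ∈ T → pmul a b ∈ T)
    (hstar : ∀ a ∈ T, pstar a ∈ T)
    (hM : Mn n ⊆ T) (hJ : IsJoinClosed n T)
    (hproper : T ≠ Set.univ) :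
    ∃ m : ℕ, T = Pm n m :=
  joinClosed_sub_eq_Pm_general n T hmul hstar hM hJ
end

section
/- Let X be a locally compact Hausdorff space, E a meet-semilattice with least element ⊥, and D : E → Set X a strongly tight family of domains with D e ≠ ∅ for every e ≠ ⊥. Let e₀ ∈ E and let 𝒥 ⊆ E be an ideal with e ≤ e₀ for all e ∈ 𝒥. Then ⋃_{e∈𝒥} D e is a closed subset of D e₀ (with respect to the relative topology of D e₀) if and only if 𝒥 admits a finite cover. -/
/-!
Since `D e₀` is compact and Hausdorff, the union `U = ⋃_{e ∈ 𝒥} D e` is closed in `D e₀` exactly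
when it is compact. A finite subcover of `U` by the open sets `D e` is a finite cover of `𝒥`,
because each nonzero `e ∈ 𝒥` has a point of `D e` that lies in some `D c`. Conversely, if `C` is a
finite cover, every basic neighbourhood `D f` of a point of `U` meets some `D c` with `c ∈ C`
(apply the cover to `f ⊓ e ∈ 𝒥`), so `U` lies in the closure of the compact set `⋃_{c ∈ C} D c`,
and hence equals it.
-/

/-- A strongly tight family of domains on `X` indexed by the meet-semilattice `E`:
`D ⊥ = ∅`, `D (e ⊓ f) = D e ∩ D f`, each `D e` is compact open, and the `D e`
form a basis for the topology of `X`. -/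
structure StronglyTightFamily (E X : Type*) [SemilatticeInf E] [OrderBot E]
    [TopologicalSpace X] (D : E → Set X) : Prop where
  bot_eq : D ⊥ = ∅
  inf_eq : ∀ e f : E, D (e ⊓ f) = D e ∩ D f
  isCompact : ∀ e : E, IsCompact (D e)
  isOpen : ∀ e : E, IsOpen (D e)
  isBasis : TopologicalSpace.IsTopologicalBasis (Set.range D)

open Set

theorem isClosed_preimage_val_iff_isCompact {X : Type*} [TopologicalSpace X] [T2Space X]
    {S U : Set X} (hS : IsCompact S) (hUS : U ⊆ S) :
    IsClosed (Subtype.val ⁻¹' U : Set S) ↔ IsCompact U := by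
  refine ⟨fun hU => ?_, fun hU => hU.isClosed.preimage continuous_subtype_val⟩
  obtain ⟨F, hF, hFU⟩ := hU.image_val
  rw [Subtype.image_preimage_coe, inter_eq_right.2 hUS] at hFU
  exact hFU ▸ hS.inter_left hF

def IsCover {E : Type*} [SemilatticeInf E] [OrderBot E] (J C : Set E) : Prop :=
  C ⊆ J ∧ ∀ e ∈ J, e ≠ ⊥ → ∃ c ∈ C, e ⊓ c ≠ ⊥

namespace StronglyTightFamily

variable {E X : Type*} [SemilatticeInf E] [OrderBot E] [TopologicalSpace X] {D : E → Set X}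

theorem mem_inf_iff (hD : StronglyTightFamily E X D) {e f : E} {x : X} :
    x ∈ D (e ⊓ f) ↔ x ∈ D e ∧ x ∈ D f := by
  rw [hD.inf_eq]; rfl

theorem mono (hD : StronglyTightFamily E X D) {e f : E} (h : e ≤ f) : D e ⊆ D f :=
  fun _ hx => (hD.mem_inf_iff.1 (by rwa [inf_eq_left.2 h])).2

theorem ne_bot_of_mem (hD : StronglyTightFamily E X D) {e : E} {x : X} (hx : x ∈ D e) :
    e ≠ ⊥ := by
  rintro rfl
  rw [hD.bot_eq] at hx
  exact hx

theorem inf_ne_bot_of_mem (hD : StronglyTightFamily E X D) {e f : E} {x : X} (he : x ∈ D e)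
    (hf : x ∈ D f) : e ⊓ f ≠ ⊥ :=
  hD.ne_bot_of_mem (hD.mem_inf_iff.2 ⟨he, hf⟩)

theorem isCover_of_biUnion_subset (hD : StronglyTightFamily E X D)
    (hne : ∀ e : E, e ≠ ⊥ → (D e).Nonempty) {J C : Set E} (hCJ : C ⊆ J)
    (hsub : ⋃ e ∈ J, D e ⊆ ⋃ c ∈ C, D c) : IsCover J C := by
  refine ⟨hCJ, fun e he he_ne => ?_⟩
  obtain ⟨x, hx⟩ := hne e he_ne
  obtain ⟨c, hc, hxc⟩ := mem_iUnion₂.1 (hsub (mem_iUnion₂.2 ⟨e, he, hx⟩))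
  exact ⟨c, hc, hD.inf_ne_bot_of_mem hx hxc⟩

theorem biUnion_subset_closure_of_isCover (hD : StronglyTightFamily E X D)
    (hne : ∀ e : E, e ≠ ⊥ → (D e).Nonempty) {J C : Set E} (hJ : IsLowerSet J)
    (hC : IsCover J C) : ⋃ e ∈ J, D e ⊆ closure (⋃ c ∈ C, D c) := by
  refine iUnion₂_subset fun e he x hxe => mem_closure_iff.2 fun O hO hxO => ?_
  obtain ⟨_, ⟨f, rfl⟩, hxf, hfO⟩ := hD.isBasis.exists_subset_of_mem_open hxO hO
  obtain ⟨c, hc, hfec⟩ :=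
    hC.2 (f ⊓ e) (hJ inf_le_right he) (hD.inf_ne_bot_of_mem hxf hxe)
  obtain ⟨y, hy⟩ := hne _ hfec
  rw [hD.mem_inf_iff, hD.mem_inf_iff] at hy
  obtain ⟨⟨hyf, -⟩, hyc⟩ := hy
  exact ⟨y, hfO hyf, mem_iUnion₂.2 ⟨c, hc, hyc⟩⟩

theorem isCompact_biUnion_iff_exists_finite_cover [T2Space X]
    (hD : StronglyTightFamily E X D)
    (hne : ∀ e : E, e ≠ ⊥ → (D e).Nonempty) {J : Set E} (hJ : IsLowerSet J) :
    IsCompact (⋃ e ∈ J, D e) ↔ ∃ C : Finset E, IsCover J C := by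
  constructor
  · intro hU
    obtain ⟨C, hCJ, hCfin, hsub⟩ :=
      hU.elim_finite_subcover_image (fun e _ => hD.isOpen e) subset_rfl
    refine ⟨hCfin.toFinset, hD.isCover_of_biUnion_subset hne ?_ ?_⟩ <;>
      rwa [Finite.coe_toFinset]
  · rintro ⟨C, hC⟩
    have hV : IsCompact (⋃ c ∈ C, D c) := C.isCompact_biUnion fun c _ => hD.isCompact c
    have hUV : ⋃ e ∈ J, D e = ⋃ c ∈ C, D c :=
      (hV.isClosed.closure_eq ▸ hD.biUnion_subset_closure_of_isCover hne hJ hC).antisymm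
        (biUnion_subset_biUnion_left hC.1)
    exact hUV ▸ hV

end StronglyTightFamily

theorem closed_iff_finite_cover_general {E X : Type*} [SemilatticeInf E] [OrderBot E]
    [TopologicalSpace X] [T2Space X]
    (D : E → Set X) (hD : StronglyTightFamily E X D)
    (hne : ∀ e : E, e ≠ ⊥ → (D e).Nonempty)
    (e₀ : E) (J : Set E) (hJ : ∀ e ∈ J, ∀ f : E, f ≤ e → f ∈ J)
    (hle : ∀ e ∈ J, e ≤ e₀) :
    IsClosed {x : D e₀ | (x : X) ∈ ⋃ e ∈ J, D e} ↔
      ∃ C : Finset E, ↑C ⊆ J ∧ ∀ e ∈ J, e ≠ ⊥ → ∃ c ∈ C, e ⊓ c ≠ ⊥ := by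
  have hU : ⋃ e ∈ J, D e ⊆ D e₀ := iUnion₂_subset fun e he => hD.mono (hle e he)
  have hJ' : IsLowerSet J := fun _ _ hfe he => hJ _ he _ hfe
  exact (isClosed_preimage_val_iff_isCompact (hD.isCompact e₀) hU).trans
    (hD.isCompact_biUnion_iff_exists_finite_cover hne hJ')

/-- for a strongly tight family of domains with nonempty domains on
nonzero elements, `e₀ ∈ E` and an ideal `𝒥` all of whose elements are `≤ e₀`:
`⋃_{e ∈ 𝒥} D e` is closed in `D e₀` (relative topology) iff `𝒥` has a finite
cover. -/
theorem closed_iff_finite_cover {E X : Type*} [SemilatticeInf E] [OrderBot E]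
    [TopologicalSpace X] [LocallyCompactSpace X] [T2Space X]
    (D : E → Set X) (hD : StronglyTightFamily E X D)
    (hne : ∀ e : E, e ≠ ⊥ → (D e).Nonempty)
    (e₀ : E) (J : Set E) (hJ : ∀ e ∈ J, ∀ f : E, f ≤ e → f ∈ J)
    (hle : ∀ e ∈ J, e ≤ e₀) :
    IsClosed {x : D e₀ | (x : X) ∈ ⋃ e ∈ J, D e} ↔
      ∃ C : Finset E, ↑C ⊆ J ∧ ∀ e ∈ J, e ≠ ⊥ → ∃ c ∈ C, e ⊓ c ≠ ⊥ :=
  closed_iff_finite_cover_general D hD hne e₀ J hJ hle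
end

section
/- Let X be a compact Hausdorff space, E a meet-semilattice with least element ⊥, and D : E → Set X a strongly tight family of domains with D e ≠ ∅ for every e ≠ ⊥. Then the ultracharacter space Ê_∞ (as a subspace of the product space E → Bool) is compact. -/
/-- A character of a meet-semilattice `E` with least element `⊥`: a map
`ξ : E → Bool` with `ξ (e ⊓ f) = ξ e && ξ f`, `ξ ⊥ = false`, and `ξ e = true`
for at least one `e`. -/
def IsChar {E : Type*} [SemilatticeInf E] [OrderBot E] (ξ : E → Bool) : Prop :=
  (∀ e f : E, ξ (e ⊓ f) = (ξ e && ξ f)) ∧ ξ ⊥ = false ∧ ∃ e : E, ξ e = true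

/-- An ultracharacter: a character maximal in the pointwise order. -/
def IsUltra {E : Type*} [SemilatticeInf E] [OrderBot E] (ξ : E → Bool) : Prop :=
  IsChar ξ ∧ ∀ η : E → Bool, IsChar η → (∀ e, ξ e = true → η e = true) → η = ξ

/-!
Each point `x` defines the character `e ↦ [x ∈ D e]`, and `x ↦ [x ∈ D ·]` is continuous
because the domains are clopen. Conversely, the domains on which a character is `true`
are nonempty compact sets closed under finite intersections, so they have a common
point `x`, and then `ξ ≤ [x ∈ D ·]`. Since the domains form a basis of a `T₁` space,
`[x ∈ D ·] ≤ [y ∈ D ·]` forces `x = y`; hence the ultracharacters are exactly the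
characters of points, i.e. the continuous image of the compact space `X`.
-/

noncomputable def domainChar {E X : Type*} (D : E → Set X) (x : X) : E → Bool :=
  fun e => (D e).boolIndicator x

section

variable {E X : Type*} {D : E → Set X}

theorem domainChar_eq_true {x : X} {e : E} : domainChar D x e = true ↔ x ∈ D e :=
  ((D e).mem_iff_boolIndicator x).symm

theorem continuous_domainChar [TopologicalSpace X] (hD : ∀ e, IsClopen (D e)) :
    Continuous (domainChar D) :=
  continuous_pi fun e => (continuous_boolIndicator_iff_isClopen (D e)).mpr (hD e)

variable [SemilatticeInf E] [OrderBot E] [TopologicalSpace X]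

namespace StronglyTightFamily

theorem isChar_domainChar (hD : StronglyTightFamily E X D) (x : X) :
    IsChar (domainChar D x) := by
  refine ⟨fun e f => ?_, ?_, ?_⟩
  · rw [Bool.eq_iff_iff]
    simp only [Bool.and_eq_true, domainChar_eq_true, hD.inf_eq, Set.mem_inter_iff]
  · rw [← Bool.not_eq_true, domainChar_eq_true, hD.bot_eq]
    exact Set.notMem_empty x
  · obtain ⟨-, ⟨e, rfl⟩, hxe, -⟩ :=
      hD.isBasis.exists_subset_of_mem_open (Set.mem_univ x) isOpen_univ
    exact ⟨e, domainChar_eq_true.mpr hxe⟩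

theorem eq_of_forall_mem_imp_mem [T1Space X] (hD : StronglyTightFamily E X D) {x y : X}
    (h : ∀ e, x ∈ D e → y ∈ D e) : y = x := by
  by_contra hyx
  obtain ⟨-, ⟨e, rfl⟩, hxe, hsub⟩ :=
    hD.isBasis.exists_subset_of_mem_open (Ne.symm hyx) isOpen_compl_singleton
  exact hsub (h e hxe) rfl

variable [T2Space X]

theorem isClopen (hD : StronglyTightFamily E X D) (e : E) : IsClopen (D e) :=
  ⟨(hD.isCompact e).isClosed, hD.isOpen e⟩

theorem exists_forall_mem_of_isChar (hD : StronglyTightFamily E X D)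
    (hne : ∀ e : E, e ≠ ⊥ → (D e).Nonempty) {ξ : E → Bool} (hξ : IsChar ξ) :
    ∃ x : X, ∀ e, ξ e = true → x ∈ D e := by
  obtain ⟨hinf, hbot, e₀, he₀⟩ := hξ
  have : Nonempty {e : E // ξ e = true} := ⟨⟨e₀, he₀⟩⟩
  have hnonempty (e : {e : E // ξ e = true}) : (D e.1).Nonempty :=
    hne e.1 fun h => Bool.false_ne_true (hbot ▸ h ▸ e.2)
  have hdirected : Directed (· ⊇ ·) (fun e : {e : E // ξ e = true} => D e.1) := by
    rintro ⟨e, he⟩ ⟨f, hf⟩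
    refine ⟨⟨e ⊓ f, by rw [hinf, he, hf, Bool.and_self]⟩, ?_, ?_⟩ <;> simp [hD.inf_eq]
  obtain ⟨x, hx⟩ := IsCompact.nonempty_iInter_of_directed_nonempty_isCompact_isClosed _
    hdirected hnonempty (fun e => hD.isCompact e.1) (fun e => (hD.isCompact e.1).isClosed)
  exact ⟨x, fun e he => Set.mem_iInter.mp hx ⟨e, he⟩⟩

theorem isUltra_domainChar (hD : StronglyTightFamily E X D)
    (hne : ∀ e : E, e ≠ ⊥ → (D e).Nonempty) (x : X) : IsUltra (domainChar D x) := by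
  refine ⟨hD.isChar_domainChar x, fun η hη hle => ?_⟩
  obtain ⟨y, hy⟩ := hD.exists_forall_mem_of_isChar hne hη
  have hyx : y = x := hD.eq_of_forall_mem_imp_mem fun e hxe =>
    hy e (hle e (domainChar_eq_true.mpr hxe))
  subst hyx
  funext e
  rw [Bool.eq_iff_iff]
  exact ⟨fun he => domainChar_eq_true.mpr (hy e he), hle e⟩

theorem setOf_isUltra_eq_range (hD : StronglyTightFamily E X D)
    (hne : ∀ e : E, e ≠ ⊥ → (D e).Nonempty) :
    {ξ : E → Bool | IsUltra ξ} = Set.range (domainChar D) := by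
  ext ξ
  constructor
  · rintro ⟨hξ, hmax⟩
    obtain ⟨x, hx⟩ := hD.exists_forall_mem_of_isChar hne hξ
    exact ⟨x, hmax _ (hD.isChar_domainChar x) fun e he => domainChar_eq_true.mpr (hx e he)⟩
  · rintro ⟨x, rfl⟩
    exact hD.isUltra_domainChar hne x

end StronglyTightFamily

end

/-- if a compact Hausdorff space `X` carries a strongly tight family
of domains with nonempty domains on nonzero elements, then the ultracharacter
space `Ê_∞` (as a subspace of the product `E → Bool`) is compact. -/
theorem ultraChars_compact {E X : Type*} [SemilatticeInf E] [OrderBot E]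
    [TopologicalSpace X] [CompactSpace X] [T2Space X]
    (D : E → Set X) (hD : StronglyTightFamily E X D)
    (hne : ∀ e : E, e ≠ ⊥ → (D e).Nonempty) :
    IsCompact {ξ : E → Bool | IsUltra ξ} := by
  rw [hD.setOf_isUltra_eq_range hne]
  exact isCompact_range (continuous_domainChar hD.isClopen)
end
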